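/- Let F(z) = Σ_{k≥0} a_k z^k, and let (p_k)_{k≥0} be a probability distribution on the nonnegative integers with p_0 > 0, p_k > 0 whenever a_k ≠ 0, and Σ_{k≥1} k p_k ≤ 1. Set b_k = a_k/p_k if p_k ≠ 0 and b_k = 0 otherwise, assume b* = sup_{k≥1} |b_k| < ∞, and set w(x,t) = v(x,t)/p_0. Fix (x,t) with 0 < t ≤ √(2/b*) and |w(x,t)| + (t²/2)|b_0| ≤ 1. Then for every measurable function u on Δ(x,t) with |u(y,s)| ≤ 1 for all (y,s) ∈ Δ(x,t), one has |v(x,t) + (1/2)∫_{Δ(x,t)} F(u(y,s)) dy ds| ≤ 1. -/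

import Mathlib

/-!
Every factor is controlled by the branching distribution: `|a₀| = |b₀| p₀` and
`|a_k| ≤ b* p_k` for `k ≥ 1`, so on the unit ball `|F| ≤ |a₀| + b* (1 - p₀)`. The cone has
area `t²`, hence `|v + ½∫F(u)| ≤ |v| + (t²/2)|a₀| + (t²/2) b* (1 - p₀)`. The first two terms
are at most `p₀` by the smallness of `w = v/p₀`, and the last at most `1 - p₀` because
`t² b* ≤ 2`.
-/

open MeasureTheory Set

/-- The backward light cone (a triangle) of the space-time point `(x,t)`. -/
def lightCone (x t : ℝ) : Set (ℝ × ℝ) :=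
  {q : ℝ × ℝ | 0 ≤ q.2 ∧ q.2 ≤ t ∧ |q.1 - x| ≤ t - q.2}

lemma isClosed_lightCone (x t : ℝ) : IsClosed (lightCone x t) :=
  (isClosed_le continuous_const continuous_snd).inter <|
    (isClosed_le continuous_snd continuous_const).inter <|
      isClosed_le (continuous_fst.sub continuous_const).abs (continuous_const.sub continuous_snd)

lemma volume_preimage_mk_right_lightCone (x t s : ℝ) :
    volume ((fun y => (y, s)) ⁻¹' lightCone x t) =
      (Icc 0 t).indicator (fun s => ENNReal.ofReal (2 * (t - s))) s := by
  by_cases hs : s ∈ Icc 0 t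
  · have : (fun y => (y, s)) ⁻¹' lightCone x t = Icc (x - (t - s)) (x + (t - s)) := by
      ext y
      simp [lightCone, hs.1, hs.2, abs_sub_le_iff, and_comm, add_comm]
    rw [this, Real.volume_Icc, indicator_of_mem hs]
    ring_nf
  · have : (fun y => (y, s)) ⁻¹' lightCone x t = ∅ :=
      eq_empty_of_forall_notMem fun y hy => hs ⟨hy.1, hy.2.1⟩
    rw [this, measure_empty, indicator_of_notMem hs]

lemma volume_lightCone (x : ℝ) {t : ℝ} (ht : 0 ≤ t) :
    volume (lightCone x t) = ENNReal.ofReal (t ^ 2) := by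
  rw [Measure.volume_eq_prod, Measure.prod_apply_symm (isClosed_lightCone x t).measurableSet]
  simp_rw [volume_preimage_mk_right_lightCone, lintegral_indicator measurableSet_Icc]
  rw [← ofReal_integral_eq_lintegral_ofReal, integral_Icc_eq_integral_Ioc,
    ← intervalIntegral.integral_of_le ht]
  · congr 1
    rw [intervalIntegral.integral_comp_sub_left (fun s => 2 * s),
      intervalIntegral.integral_const_mul]
    simp only [sub_self, sub_zero, integral_id]
    ring
  · exact (continuous_const.mul (continuous_const.sub continuous_id)).integrableOn_Icc
  · exact (ae_restrict_mem measurableSet_Icc).mono fun s hs =>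
      mul_nonneg zero_le_two (sub_nonneg.2 hs.2)

lemma abs_setIntegral_lightCone_le {x t C : ℝ} (ht : 0 ≤ t) {f : ℝ × ℝ → ℝ}
    (hf : ∀ q ∈ lightCone x t, |f q| ≤ C) :
    |∫ q in lightCone x t, f q| ≤ C * t ^ 2 := by
  have h := norm_setIntegral_le_of_norm_le_const (volume_lightCone x ht ▸ ENNReal.ofReal_lt_top)
    (f := f) hf
  rwa [Measure.real, volume_lightCone x ht, ENNReal.toReal_ofReal (sq_nonneg t)] at h

lemma abs_tsum_mul_pow_le {a : ℕ → ℝ} (ha : Summable fun k => |a k|) {z : ℝ} (hz : |z| ≤ 1) :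
    |∑' k, a k * z ^ k| ≤ ∑' k, |a k| := by
  have hterm (k : ℕ) : |a k * z ^ k| ≤ |a k| := by
    rw [abs_mul, abs_pow]
    exact mul_le_of_le_one_right (abs_nonneg _) (pow_le_one₀ (abs_nonneg _) hz)
  have hsum : Summable fun k => |a k * z ^ k| := ha.of_nonneg_of_le (fun _ => abs_nonneg _) hterm
  have h := norm_tsum_le_tsum_norm (f := fun k => a k * z ^ k) hsum
  simp only [Real.norm_eq_abs] at h
  exact h.trans (hsum.tsum_le_tsum hterm ha)

lemma tsum_le_add_mul_one_sub {c p : ℕ → ℝ} (hc : Summable c) (hp : HasSum p 1) {B : ℝ}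
    (hcp : ∀ k, c (k + 1) ≤ B * p (k + 1)) :
    ∑' k, c k ≤ c 0 + B * (1 - p 0) := by
  have htail : HasSum (fun k => p (k + 1)) (1 - p 0) := by
    simpa using (hasSum_nat_add_iff' 1).2 hp
  rw [hc.tsum_eq_zero_add, ← (htail.mul_left B).tsum_eq]
  exact add_le_add_right
    (((summable_nat_add_iff 1).2 hc).tsum_le_tsum hcp (htail.mul_left B).summable) _

lemma abs_eq_abs_mul_of_eq_ite {a p b : ℝ} (hb : b = if p ≠ 0 then a / p else 0)
    (hpa : a ≠ 0 → 0 < p) :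
    |a| = |b| * p := by
  rcases eq_or_ne a 0 with rfl | ha
  · simp [hb]
  · have hp := hpa ha
    rw [hb, if_pos hp.ne', abs_div, abs_of_pos hp, div_mul_cancel₀ _ hp.ne']

lemma sq_mul_le_of_le_sqrt_div {t B c : ℝ} (ht : 0 ≤ t) (hB : 0 ≤ B) (hc : 0 ≤ c)
    (htB : t ≤ Real.sqrt (c / B)) :
    t ^ 2 * B ≤ c := by
  rcases hB.eq_or_lt with rfl | hB
  · simpa using hc
  · rwa [← le_div_iff₀ hB, ← Real.le_sqrt ht (div_nonneg hc hB.le)]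

theorem unit_ball_invariance_general
    (a : ℕ → ℝ) (ha : Summable fun k => |a k|)
    (F : ℝ → ℝ) (hFdef : ∀ z : ℝ, |z| ≤ 1 → F z = ∑' k : ℕ, a k * z ^ k)
    (p : ℕ → ℝ) (hpnn : ∀ k, 0 ≤ p k) (hpsum : HasSum p 1)
    (hp0 : 0 < p 0) (hppos : ∀ k, a k ≠ 0 → 0 < p k)
    (b : ℕ → ℝ) (hb : ∀ k, b k = if p k ≠ 0 then a k / p k else 0)
    (hbdd : BddAbove (Set.range fun k : ℕ => |b (k + 1)|))
    (v w : ℝ → ℝ → ℝ)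
    (hw : ∀ x t : ℝ, w x t = v x t / p 0)
    (x t : ℝ) (ht : 0 < t)
    (htB : t ≤ Real.sqrt (2 / (⨆ k : ℕ, |b (k + 1)|)))
    (hsmall : |w x t| + t ^ 2 / 2 * |b 0| ≤ 1)
    (u : ℝ × ℝ → ℝ)
    (hu : ∀ q ∈ lightCone x t, |u q| ≤ 1) :
    |v x t + (1 / 2) * (∫ q in lightCone x t, F (u q))| ≤ 1 := by
  set B := ⨆ k : ℕ, |b (k + 1)|
  have hB : 0 ≤ B := (abs_nonneg _).trans (le_ciSup hbdd 0)
  have htB2 : t ^ 2 * B ≤ 2 := sq_mul_le_of_le_sqrt_div ht.le hB zero_le_two htB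
  have hcoeff (k : ℕ) : |a k| = |b k| * p k := abs_eq_abs_mul_of_eq_ite (hb k) (hppos k)
  have hF (z : ℝ) (hz : |z| ≤ 1) : |F z| ≤ |a 0| + B * (1 - p 0) := by
    rw [hFdef z hz]
    refine (abs_tsum_mul_pow_le ha hz).trans (tsum_le_add_mul_one_sub ha hpsum fun k => ?_)
    rw [hcoeff]
    exact mul_le_mul_of_nonneg_right (le_ciSup hbdd k) (hpnn _)
  have hI := abs_setIntegral_lightCone_le ht.le fun q hq => hF _ (hu q hq)
  have hv : |v x t| + t ^ 2 / 2 * |a 0| ≤ p 0 := by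
    rw [hw, abs_div, abs_of_pos hp0] at hsmall
    rw [hcoeff]
    have := mul_le_mul_of_nonneg_right hsmall hp0.le
    field_simp at this ⊢
    linarith
  have hp0le : p 0 ≤ 1 := le_hasSum hpsum 0 fun k _ => hpnn k
  have htail : t ^ 2 / 2 * (B * (1 - p 0)) ≤ 1 - p 0 := by
    rw [← mul_assoc]
    exact mul_le_of_le_one_left (by linarith) (by linarith)
  calc |v x t + (1 / 2) * (∫ q in lightCone x t, F (u q))|
      ≤ |v x t| + (1 / 2) * |∫ q in lightCone x t, F (u q)| := by
        simpa [abs_mul] using abs_add_le (v x t) ((1 / 2) * ∫ q in lightCone x t, F (u q))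
    _ ≤ |v x t| + (1 / 2) * ((|a 0| + B * (1 - p 0)) * t ^ 2) := by gcongr
    _ = (|v x t| + t ^ 2 / 2 * |a 0|) + t ^ 2 / 2 * (B * (1 - p 0)) := by ring
    _ ≤ 1 := by linarith

/-- invariance of the unit ball under the integral operator of the
d'Alembert fixed-point equation: if `0 < t ≤ √(2/b*)` (where `b* = sup_{k≥1}|b_k|`)
and `|w(x,t)| + (t²/2)|b₀| ≤ 1`, then for any measurable `u` with `|u| ≤ 1` on `Δ(x,t)`
one has `|v(x,t) + (1/2)∫_{Δ(x,t)} F(u)| ≤ 1`. -/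
theorem unit_ball_invariance
    (a : ℕ → ℝ) (ha : Summable fun k => |a k|)
    (F : ℝ → ℝ) (hFdef : ∀ z : ℝ, |z| ≤ 1 → F z = ∑' k : ℕ, a k * z ^ k)
    (p : ℕ → ℝ) (hpnn : ∀ k, 0 ≤ p k) (hpsum : HasSum p 1)
    (hp0 : 0 < p 0) (hppos : ∀ k, a k ≠ 0 → 0 < p k)
    (hmean : Summable fun k : ℕ => (k : ℝ) * p k)
    (hmean1 : (∑' k : ℕ, (k : ℝ) * p k) ≤ 1)
    (b : ℕ → ℝ) (hb : ∀ k, b k = if p k ≠ 0 then a k / p k else 0)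
    (hbdd : BddAbove (Set.range fun k : ℕ => |b (k + 1)|))
    (φ ψ : ℝ → ℝ) (v w : ℝ → ℝ → ℝ)
    (hv : ∀ x t : ℝ, v x t =
      (1 / 2) * (∫ y in (x - t)..(x + t), ψ y) + (1 / 2) * (φ (x + t) + φ (x - t)))
    (hw : ∀ x t : ℝ, w x t = v x t / p 0)
    (x t : ℝ) (ht : 0 < t)
    (htB : t ≤ Real.sqrt (2 / (⨆ k : ℕ, |b (k + 1)|)))
    (hsmall : |w x t| + t ^ 2 / 2 * |b 0| ≤ 1)
    (u : ℝ × ℝ → ℝ) (hmeas : Measurable u)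
    (hu : ∀ q ∈ lightCone x t, |u q| ≤ 1) :
    |v x t + (1 / 2) * (∫ q in lightCone x t, F (u q))| ≤ 1 :=
  unit_ball_invariance_general a ha F hFdef p hpnn hpsum hp0 hppos b hb hbdd v w hw x t ht htB
    hsmall u hu
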